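/- Let 1 < p < ∞ and let (Ω,μ) be a measure space. For a measurable function f on Ω with f**(∞) = lim_{t→∞} f**(t) = 0, the following three conditions are equivalent: (a) ‖f‖*_{L(p,∞)} = sup_{s>0} s^{1/p} f*(s) < ∞ (equivalently ‖f‖_{L(p,∞)} = sup_{s>0} s^{1/p} f**(s) < ∞); (b) ‖f‖^#_{L(p,∞)} = sup_{s>0} s^{1/p}( f**(s) − f*(s) ) < ∞; (c) ‖f‖^{##}_{L(p,∞)} = sup_{t>0} (λ_f(t))^{−(1−1/p)} ∫_t^∞ λ_f(s) ds < ∞. -/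

import Mathlib

open MeasureTheory Set
open scoped ENNReal NNReal

noncomputable section

/-- The distribution function `λ_f(t) = μ {x : |f(x)| > t}`. -/
def distFun {α : Type*} [MeasurableSpace α] (μ : Measure α) (f : α → ℝ) (t : ℝ) : ℝ≥0∞ :=
  μ {x | t < |f x|}

/-- The non-increasing rearrangement `f*(t) = inf {s > 0 : λ_f(s) ≤ t}`. -/
def rearr {α : Type*} [MeasurableSpace α] (μ : Measure α) (f : α → ℝ) (t : ℝ) : ℝ≥0∞ :=
  sInf (ENNReal.ofReal '' {s : ℝ | 0 < s ∧ distFun μ f s ≤ ENNReal.ofReal t})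

/-- The maximal function `f**(t) = (1/t) ∫₀ᵗ f*(s) ds`. -/
def dstar {α : Type*} [MeasurableSpace α] (μ : Measure α) (f : α → ℝ) (t : ℝ) : ℝ≥0∞ :=
  (∫⁻ s in Set.Ioc (0 : ℝ) t, rearr μ f s) / ENNReal.ofReal t

/-- The `L(∞,∞)` "norm" : `sup_{t>0} (f**(t) - f*(t))`. -/
def oscNorm {α : Type*} [MeasurableSpace α] (μ : Measure α) (f : α → ℝ) : ℝ≥0∞ :=
  ⨆ (t : ℝ) (_ : 0 < t), dstar μ f t - rearr μ f t

/-- The Marcinkiewicz `L(p,∞)` quasinorm `‖f‖*_{L(p,∞)} = sup_{t>0} t (λ_f(t))^{1/p}`. -/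
def wkNorm {α : Type*} [MeasurableSpace α] (μ : Measure α) (p : ℝ) (f : α → ℝ) : ℝ≥0∞ :=
  ⨆ (t : ℝ) (_ : 0 < t), ENNReal.ofReal t * distFun μ f t ^ (1 / p)

/-- `‖f‖_{L(p,∞)} = sup_{s>0} s^{1/p} f**(s)`. -/
def wkNormStarStar {α : Type*} [MeasurableSpace α] (μ : Measure α) (p : ℝ) (f : α → ℝ) : ℝ≥0∞ :=
  ⨆ (s : ℝ) (_ : 0 < s), ENNReal.ofReal s ^ (1 / p) * dstar μ f s

/-- `‖f‖*_{L(p,∞)} = sup_{s>0} s^{1/p} f*(s)` (rearrangement form). -/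
def wkNormStar {α : Type*} [MeasurableSpace α] (μ : Measure α) (p : ℝ) (f : α → ℝ) : ℝ≥0∞ :=
  ⨆ (s : ℝ) (_ : 0 < s), ENNReal.ofReal s ^ (1 / p) * rearr μ f s

/-- `‖f‖^#_{L(p,∞)} = sup_{s>0} s^{1/p} (f**(s) - f*(s))`. -/
def sharpNorm {α : Type*} [MeasurableSpace α] (μ : Measure α) (p : ℝ) (f : α → ℝ) : ℝ≥0∞ :=
  ⨆ (s : ℝ) (_ : 0 < s), ENNReal.ofReal s ^ (1 / p) * (dstar μ f s - rearr μ f s)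

/-- `‖f‖^{##}_{L(p,∞)} = sup_{t>0} (λ_f(t))^{-(1-1/p)} ∫_t^∞ λ_f(s) ds`. -/
def sharpSharpNorm {α : Type*} [MeasurableSpace α] (μ : Measure α) (p : ℝ) (f : α → ℝ) : ℝ≥0∞ :=
  ⨆ (t : ℝ) (_ : 0 < t),
    distFun μ f t ^ (-(1 - 1 / p)) * ∫⁻ s in Set.Ioi t, distFun μ f s

/-- `‖f‖^{##}_{L(∞,∞)} = inf {C : ∫_t^∞ λ_f(s) ds ≤ C λ_f(t) for all t > 0}`. -/
def sharpSharpInf {α : Type*} [MeasurableSpace α] (μ : Measure α) (f : α → ℝ) : ℝ≥0∞ :=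
  sInf {C : ℝ≥0∞ | ∀ t : ℝ, 0 < t →
    ∫⁻ s in Set.Ioi t, distFun μ f s ≤ C * distFun μ f t}

/-- O'Neil's quantity `inf {C^{1/p} : ∫_t^∞ λ_f(s) ds ≤ C t^{1-p} for all t > 0}`. -/
def oneilQuantity {α : Type*} [MeasurableSpace α] (μ : Measure α) (p : ℝ) (f : α → ℝ) : ℝ≥0∞ :=
  sInf {D : ℝ≥0∞ | ∃ C : ℝ≥0∞, D = C ^ (1 / p) ∧
    ∀ t : ℝ, 0 < t → ∫⁻ s in Set.Ioi t, distFun μ f s ≤ C * ENNReal.ofReal t ^ (1 - p)}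

/-- A cube in `ℝⁿ` with sides parallel to the coordinate axes. -/
def IsCube {n : ℕ} (Q : Set (Fin n → ℝ)) : Prop :=
  ∃ (a : Fin n → ℝ) (l : ℝ), 0 < l ∧ Q = Set.univ.pi fun i => Set.Icc (a i) (a i + l)

/-- A countable family of subcubes of `Q₀` with pairwise disjoint interiors. -/
def IsPackingIn {n : ℕ} (Q₀ : Set (Fin n → ℝ)) (Q : ℕ → Set (Fin n → ℝ)) : Prop :=
  (∀ i, IsCube (Q i) ∧ Q i ⊆ Q₀) ∧
    Pairwise fun i j => interior (Q i) ∩ interior (Q j) = ∅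

/-- The average `f_Q = (1/|Q|) ∫_Q f`. -/
def cubeAvg {n : ℕ} (f : (Fin n → ℝ) → ℝ) (Q : Set (Fin n → ℝ)) : ℝ :=
  ⨍ x in Q, f x

/-- The mean oscillation `(1/|Q|) ∫_Q |f - f_Q|`. -/
def meanOsc {n : ℕ} (f : (Fin n → ℝ) → ℝ) (Q : Set (Fin n → ℝ)) : ℝ :=
  ⨍ x in Q, |f x - cubeAvg f Q|

/-- The John–Nirenberg functional `JN_p(f,Q₀)`. -/
def JN {n : ℕ} (p : ℝ) (f : (Fin n → ℝ) → ℝ) (Q₀ : Set (Fin n → ℝ)) : ℝ≥0∞ :=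
  ⨆ (Q : ℕ → Set (Fin n → ℝ)) (_ : IsPackingIn Q₀ Q),
    (∑' i, volume (Q i) * ENNReal.ofReal (meanOsc f (Q i)) ^ p) ^ (1 / p)

/-- The BMO norm `‖f‖_{BMO(Q₀)}`. -/
def bmoNorm {n : ℕ} (f : (Fin n → ℝ) → ℝ) (Q₀ : Set (Fin n → ℝ)) : ℝ≥0∞ :=
  ⨆ (Q : Set (Fin n → ℝ)) (_ : IsCube Q ∧ Q ⊆ Q₀), ENNReal.ofReal (meanOsc f Q)

/-- The Garsia–Rodemich functional `GaRo_p(f,Q₀)`: the least constant `C` such that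
for every packing `{Qᵢ}` of `Q₀`,
`Σᵢ (1/|Qᵢ|) ∫_{Qᵢ}∫_{Qᵢ} |f(x)-f(y)| dx dy ≤ C (Σᵢ |Qᵢ|)^{1/p'}` where `1/p' = 1 - 1/p`. -/
def GaRo {n : ℕ} (p : ℝ) (f : (Fin n → ℝ) → ℝ) (Q₀ : Set (Fin n → ℝ)) : ℝ≥0∞ :=
  sInf {C : ℝ≥0∞ | ∀ Q : ℕ → Set (Fin n → ℝ), IsPackingIn Q₀ Q →
    (∑' i, (volume (Q i))⁻¹ *
        ∫⁻ x in Q i, ∫⁻ y in Q i, ENNReal.ofReal |f x - f y|) ≤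
      C * (∑' i, volume (Q i)) ^ (1 - 1 / p)}

/-
The key identity is `s (f**(s) - f*(s)) = ∫_{f*(s)}^∞ λ_f`. It comes from
`∫₀ˢ f* = ∫₀^∞ min(s, λ_f)` (Tonelli, together with the duality `f*(u) > v ⟺ λ_f(v) > u`,
which uses the right-continuity of `λ_f`). Taking `s = λ_f(t)` shows that `‖f‖^#` and `‖f‖^##`
coincide. The Hardy integral `∫₀ᵗ u^{-1/p} du = p' t^{1/p'}` gives `‖f‖ ≤ p' ‖f‖*`, and
`f* ≤ f**` gives the reverse bound. Finally, `2t f**(2t) ≥ t f**(t) + t f*(2t)` gives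
`f**(t) ≤ f**(2t) + (f** - f*)(2t)`. Iterating this and letting `f**(2ⁿ t) → 0` bounds `f**(t)`
by a geometric series in `‖f‖^# t^{-1/p}`.
-/

open Filter Topology

lemma iUnion_Ioi_add_one_div (r : ℝ) : ⋃ n : ℕ, Ioi (r + 1 / ((n : ℝ) + 1)) = Ioi r := by
  refine Subset.antisymm (iUnion_subset fun _ x hx => ?_) fun x hx => ?_
  · exact lt_trans (lt_add_of_pos_right r Nat.one_div_pos_of_nat) hx
  · obtain ⟨n, hn⟩ := exists_nat_one_div_lt (sub_pos.2 (mem_Ioi.1 hx))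
    exact mem_iUnion.2 ⟨n, by simp only [mem_Ioi]; linarith⟩

lemma monotone_Ioi_add_one_div (r : ℝ) : Monotone fun n : ℕ => Ioi (r + 1 / ((n : ℝ) + 1)) :=
  fun _ _ hmn => Ioi_subset_Ioi (by gcongr)

lemma setLIntegral_Ioi_le_of_forall_lt {g : ℝ → ℝ≥0∞} {r : ℝ} {C : ℝ≥0∞}
    (h : ∀ v, r < v → ∫⁻ x in Ioi v, g x ≤ C) : ∫⁻ x in Ioi r, g x ≤ C := by
  rw [← iUnion_Ioi_add_one_div r,
    setLIntegral_iUnion_of_directed _ (monotone_Ioi_add_one_div r).directed_le]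
  exact iSup_le fun n => h _ (lt_add_of_pos_right r Nat.one_div_pos_of_nat)

lemma Antitone.mul_le_setLIntegral_Ioc {g : ℝ → ℝ≥0∞} (hg : Antitone g) (a b : ℝ) :
    ENNReal.ofReal (b - a) * g b ≤ ∫⁻ u in Ioc a b, g u :=
  calc ENNReal.ofReal (b - a) * g b = ∫⁻ _ in Ioc a b, g b := by
        rw [setLIntegral_const, Real.volume_Ioc, mul_comm]
    _ ≤ ∫⁻ u in Ioc a b, g u := setLIntegral_mono' measurableSet_Ioc fun _ hu => hg hu.2

lemma volume_ofReal_lt_inter_Ioi (c : ℝ≥0∞) :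
    volume ({v : ℝ | ENNReal.ofReal v < c} ∩ Ioi 0) = c := by
  rcases eq_or_ne c ⊤ with rfl | hc
  · simp
  · have : {v : ℝ | ENNReal.ofReal v < c} ∩ Ioi 0 = Ioo 0 c.toReal := by
      ext v
      simp only [mem_inter_iff, mem_ofPred_eq, mem_Ioi, mem_Ioo]
      exact ⟨fun h => ⟨h.2, (ENNReal.ofReal_lt_iff_lt_toReal h.2.le hc).1 h.1⟩,
        fun h => ⟨(ENNReal.ofReal_lt_iff_lt_toReal h.1.le hc).2 h.2, h.1⟩⟩
    rw [this, Real.volume_Ioo, sub_zero, ENNReal.ofReal_toReal hc]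

lemma volume_ofReal_lt_inter_Ioc (c : ℝ≥0∞) (s : ℝ) :
    volume ({v : ℝ | ENNReal.ofReal v < c} ∩ Ioc 0 s) = min (ENNReal.ofReal s) c := by
  rcases le_or_gt c (ENNReal.ofReal s) with hcs | hsc
  · have : {v : ℝ | ENNReal.ofReal v < c} ∩ Ioc 0 s = {v | ENNReal.ofReal v < c} ∩ Ioi 0 := by
      refine Subset.antisymm (inter_subset_inter_right _ Ioc_subset_Ioi_self) ?_
      rintro v ⟨hvc, hv⟩
      exact ⟨hvc, hv, ((ENNReal.ofReal_lt_ofReal_iff_of_nonneg (le_of_lt hv)).1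
        (hvc.trans_le hcs)).le⟩
    rw [this, volume_ofReal_lt_inter_Ioi, min_eq_right hcs]
  · have : {v : ℝ | ENNReal.ofReal v < c} ∩ Ioc 0 s = Ioc 0 s :=
      inter_eq_right.2 fun v hv => (ENNReal.ofReal_le_ofReal hv.2).trans_lt hsc
    rw [this, Real.volume_Ioc, sub_zero, min_eq_left hsc.le]

lemma setLIntegral_eq_lintegral_volume_lt {g : ℝ → ℝ≥0∞} (hg : Measurable g) (A : Set ℝ) :
    ∫⁻ u in A, g u = ∫⁻ v in Ioi 0, volume ({u | ENNReal.ofReal v < g u} ∩ A) := by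
  have hS : MeasurableSet {q : ℝ × ℝ | ENNReal.ofReal q.2 < g q.1} :=
    measurableSet_lt (ENNReal.measurable_ofReal.comp measurable_snd) (hg.comp measurable_fst)
  have hg_eq : ∀ u, g u = volume.restrict (Ioi 0) {v : ℝ | ENNReal.ofReal v < g u} := fun u => by
    rw [Measure.restrict_apply' measurableSet_Ioi, volume_ofReal_lt_inter_Ioi]
  calc ∫⁻ u in A, g u
      = ((volume.restrict A).prod (volume.restrict (Ioi 0)))
          {q : ℝ × ℝ | ENNReal.ofReal q.2 < g q.1} := by
        rw [Measure.prod_apply hS]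
        exact lintegral_congr fun u => hg_eq u
    _ = ∫⁻ v in Ioi 0, volume ({u | ENNReal.ofReal v < g u} ∩ A) := by
        rw [Measure.prod_apply_symm hS]
        exact lintegral_congr fun v =>
          Measure.restrict_apply (hg (measurableSet_Ioi (a := ENNReal.ofReal v)))

lemma setLIntegral_Ioc_ofReal_rpow {a : ℝ} (ha : -1 < a) {t : ℝ} (ht : 0 ≤ t) :
    ∫⁻ u in Ioc 0 t, ENNReal.ofReal u ^ a = ENNReal.ofReal (t ^ (a + 1) / (a + 1)) := by
  rw [setLIntegral_congr_fun measurableSet_Ioc fun u hu => ENNReal.ofReal_rpow_of_pos hu.1,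
    ← ofReal_integral_eq_lintegral_ofReal, ← intervalIntegral.integral_of_le ht,
    integral_rpow (Or.inl ha), Real.zero_rpow (by linarith), sub_zero]
  · exact (intervalIntegrable_iff_integrableOn_Ioc_of_le ht).1
      (intervalIntegral.intervalIntegrable_rpow' ha)
  · exact ae_restrict_of_forall_mem measurableSet_Ioc fun u hu => Real.rpow_nonneg hu.1.le a

lemma ENNReal.rpow_mul_rpow_neg_mul {c : ℝ≥0∞} (h0 : c ≠ 0) (htop : c ≠ ⊤) (e : ℝ) (X : ℝ≥0∞) :
    c ^ e * (c ^ (-e) * X) = X := by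
  rw [← mul_assoc, ← ENNReal.rpow_add _ _ h0 htop, add_neg_cancel, ENNReal.rpow_zero, one_mul]

lemma ENNReal.rpow_neg_mul_rpow_mul {c : ℝ≥0∞} (h0 : c ≠ 0) (htop : c ≠ ⊤) (e : ℝ) (X : ℝ≥0∞) :
    c ^ (-e) * (c ^ e * X) = X := by
  simpa only [neg_neg] using ENNReal.rpow_mul_rpow_neg_mul h0 htop (-e) X

lemma ENNReal.rpow_neg_one_sub_mul_mul {c : ℝ≥0∞} (h0 : c ≠ 0) (htop : c ≠ ⊤) (e : ℝ)
    (X : ℝ≥0∞) : c ^ (-(1 - e)) * (c * X) = c ^ e * X := by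
  conv_lhs => rw [← mul_assoc]; enter [1, 2]; rw [← ENNReal.rpow_one c]
  rw [← ENNReal.rpow_add _ _ h0 htop, neg_sub, sub_add_cancel]

lemma ofReal_two_rpow_neg_lt_one {p : ℝ} (hp : 0 < p) : ENNReal.ofReal (2 ^ (-(1 / p))) < 1 :=
  ENNReal.ofReal_lt_one.2 <|
    Real.rpow_lt_one_of_one_lt_of_neg one_lt_two (neg_neg_of_pos (by positivity))

lemma le_tsum_of_le_add_comp_two_mul {φ ψ : ℝ → ℝ≥0∞} (hφ : Tendsto φ atTop (𝓝 0))
    (h : ∀ t, 0 < t → φ t ≤ φ (2 * t) + ψ (2 * t)) {t : ℝ} (ht : 0 < t) :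
    φ t ≤ ∑' k : ℕ, ψ (2 ^ (k + 1) * t) := by
  have hiter : ∀ n : ℕ, φ t ≤ φ (2 ^ n * t) + ∑ k ∈ Finset.range n, ψ (2 ^ (k + 1) * t) := by
    intro n
    induction n with
    | zero => simp
    | succ n ih =>
      calc φ t ≤ φ (2 ^ n * t) + ∑ k ∈ Finset.range n, ψ (2 ^ (k + 1) * t) := ih
        _ ≤ φ (2 * (2 ^ n * t)) + ψ (2 * (2 ^ n * t))
              + ∑ k ∈ Finset.range n, ψ (2 ^ (k + 1) * t) := by
            gcongr
            exact h _ (by positivity)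
        _ = φ (2 ^ (n + 1) * t) + ∑ k ∈ Finset.range (n + 1), ψ (2 ^ (k + 1) * t) := by
            rw [Finset.sum_range_succ, ← mul_assoc, ← pow_succ', add_assoc, add_comm (ψ _)]
  have hpow : Tendsto (fun n : ℕ => (2 : ℝ) ^ n * t) atTop atTop :=
    (tendsto_pow_atTop_atTop_of_one_lt one_lt_two).atTop_mul_const ht
  have hlim := (hφ.comp hpow).add_const (∑' k : ℕ, ψ (2 ^ (k + 1) * t))
  rw [zero_add] at hlim
  exact ge_of_tendsto hlim (Eventually.of_forall fun n =>
    (hiter n).trans (add_le_add le_rfl (ENNReal.sum_le_tsum _)))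

section

variable {α : Type*} [MeasurableSpace α] {μ : Measure α} {f : α → ℝ}

lemma distFun_antitone : Antitone (distFun μ f) :=
  fun _ _ h => measure_mono fun _ hx => lt_of_le_of_lt h hx

lemma rearr_antitone : Antitone (rearr μ f) :=
  fun _ _ h => sInf_le_sInf <| image_mono fun _ hw =>
    ⟨hw.1, hw.2.trans (ENNReal.ofReal_le_ofReal h)⟩

lemma exists_lt_distFun_of_lt {c : ℝ≥0∞} {v : ℝ} (h : c < distFun μ f v) :
    ∃ w, v < w ∧ c < distFun μ f w := by
  have hU : {x | v < |f x|} = ⋃ n : ℕ, (fun x => |f x|) ⁻¹' Ioi (v + 1 / ((n : ℝ) + 1)) := by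
    rw [← preimage_iUnion, iUnion_Ioi_add_one_div]; rfl
  have hmono : Monotone fun n : ℕ => (fun x => |f x|) ⁻¹' Ioi (v + 1 / ((n : ℝ) + 1)) :=
    fun _ _ hmn => preimage_mono (monotone_Ioi_add_one_div v hmn)
  rw [distFun, hU, hmono.directed_le.measure_iUnion] at h
  obtain ⟨n, hn⟩ := lt_iSup_iff.1 h
  exact ⟨_, lt_add_of_pos_right v Nat.one_div_pos_of_nat, hn⟩

lemma rearr_le_ofReal_iff {u v : ℝ} (hv : 0 < v) :
    rearr μ f u ≤ ENNReal.ofReal v ↔ distFun μ f v ≤ ENNReal.ofReal u := by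
  refine ⟨fun h => ?_, fun h => sInf_le ⟨v, ⟨hv, h⟩, rfl⟩⟩
  by_contra! huv
  obtain ⟨w, hvw, hw⟩ := exists_lt_distFun_of_lt huv
  have hwR : ENNReal.ofReal w ≤ rearr μ f u := by
    refine le_sInf ?_
    rintro _ ⟨s, ⟨-, hs⟩, rfl⟩
    refine ENNReal.ofReal_le_ofReal (le_of_not_gt fun hsw => ?_)
    exact (hw.trans_le (distFun_antitone hsw.le)).not_ge hs
  exact ((ENNReal.ofReal_lt_ofReal_iff (hv.trans hvw)).2 hvw).not_ge (hwR.trans h)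

lemma ofReal_mul_dstar {t : ℝ} (ht : 0 < t) :
    ENNReal.ofReal t * dstar μ f t = ∫⁻ u in Ioc 0 t, rearr μ f u :=
  ENNReal.mul_div_cancel (ENNReal.ofReal_pos.2 ht).ne' ENNReal.ofReal_ne_top

lemma rearr_le_dstar {t : ℝ} (ht : 0 < t) : rearr μ f t ≤ dstar μ f t := by
  refine (ENNReal.mul_le_mul_iff_right (ENNReal.ofReal_pos.2 ht).ne' ENNReal.ofReal_ne_top).1 ?_
  rw [ofReal_mul_dstar ht]
  simpa using rearr_antitone.mul_le_setLIntegral_Ioc 0 t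

lemma rearr_ne_top (hlim : Tendsto (dstar μ f) atTop (𝓝 0)) {u : ℝ} (hu : 0 < u) :
    rearr μ f u ≠ ⊤ := by
  obtain ⟨t, ht1, hut⟩ :=
    ((hlim.eventually (gt_mem_nhds one_pos)).and (eventually_ge_atTop u)).exists
  have ht : 0 < t := hu.trans_le hut
  have hfin : ENNReal.ofReal u * rearr μ f u ≠ ⊤ := by
    refine ne_top_of_le_ne_top (ENNReal.mul_ne_top (ENNReal.ofReal_ne_top (r := t)) ht1.ne_top) ?_
    calc ENNReal.ofReal u * rearr μ f u ≤ ∫⁻ s in Ioc 0 u, rearr μ f s := by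
          simpa using rearr_antitone.mul_le_setLIntegral_Ioc 0 u
      _ ≤ ∫⁻ s in Ioc 0 t, rearr μ f s := lintegral_mono_set (Ioc_subset_Ioc_right hut)
      _ = ENNReal.ofReal t * dstar μ f t := (ofReal_mul_dstar ht).symm
  exact fun h => hfin (by rw [h, ENNReal.mul_top (ENNReal.ofReal_pos.2 hu).ne'])

lemma distFun_ne_top (hlim : Tendsto (dstar μ f) atTop (𝓝 0)) {t : ℝ} (ht : 0 < t) :
    distFun μ f t ≠ ⊤ := by
  obtain ⟨u, hut, hu⟩ := ((hlim.eventually (gt_mem_nhds (ENNReal.ofReal_pos.2 ht))).and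
    (eventually_gt_atTop 0)).exists
  exact ne_top_of_le_ne_top ENNReal.ofReal_ne_top
    ((rearr_le_ofReal_iff ht).1 ((rearr_le_dstar hu).trans hut.le))

lemma setLIntegral_Ioc_rearr (s : ℝ) :
    ∫⁻ u in Ioc 0 s, rearr μ f u = ∫⁻ v in Ioi 0, min (ENNReal.ofReal s) (distFun μ f v) := by
  rw [setLIntegral_eq_lintegral_volume_lt rearr_antitone.measurable]
  refine setLIntegral_congr_fun measurableSet_Ioi fun v hv => ?_
  have : {u | ENNReal.ofReal v < rearr μ f u} ∩ Ioc 0 s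
      = {u : ℝ | ENNReal.ofReal u < distFun μ f v} ∩ Ioc 0 s := by
    ext u
    simp only [mem_inter_iff, mem_ofPred_eq, ← not_le, rearr_le_ofReal_iff hv]
  rw [this, volume_ofReal_lt_inter_Ioc]

lemma setLIntegral_Ioi_distFun_eq_zero {t : ℝ} (h : distFun μ f t = 0) :
    ∫⁻ v in Ioi t, distFun μ f v = 0 := by
  rw [setLIntegral_congr_fun measurableSet_Ioi fun v hv =>
    nonpos_iff_eq_zero.1 (h ▸ distFun_antitone (le_of_lt hv)), lintegral_zero]

lemma ofReal_mul_dstar_sub_rearr {s : ℝ} (hs : 0 < s) (hR : rearr μ f s ≠ ⊤) :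
    ENNReal.ofReal s * (dstar μ f s - rearr μ f s)
      = ∫⁻ v in Ioi (rearr μ f s).toReal, distFun μ f v := by
  set r := (rearr μ f s).toReal
  have hr : rearr μ f s = ENNReal.ofReal r := (ENNReal.ofReal_toReal hR).symm
  have hr0 : 0 ≤ r := ENNReal.toReal_nonneg
  have hsplit : ENNReal.ofReal s * dstar μ f s
      = ENNReal.ofReal s * rearr μ f s + ∫⁻ v in Ioi r, distFun μ f v := by
    rw [ofReal_mul_dstar hs, setLIntegral_Ioc_rearr, ← Ioc_union_Ioi_eq_Ioi hr0,
      lintegral_union measurableSet_Ioi (Ioc_disjoint_Ioi le_rfl),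
      setLIntegral_congr Ioo_ae_eq_Ioc.symm]
    -- As `r = f*(s)`, we have `s < λ_f v` for `v < r` and `λ_f v ≤ s` for `v > r`.
    congr 1
    · rw [setLIntegral_congr_fun measurableSet_Ioo fun v hv => min_eq_left ?_,
        setLIntegral_const, Real.volume_Ioo, sub_zero, hr]
      exact le_of_lt <| not_le.1 fun h => ((rearr_le_ofReal_iff hv.1).2 h).not_gt
        (hr ▸ (ENNReal.ofReal_lt_ofReal_iff (hv.1.trans hv.2)).2 hv.2)
    · refine setLIntegral_congr_fun measurableSet_Ioi fun v hv => min_eq_right ?_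
      exact (rearr_le_ofReal_iff (hr0.trans_lt hv)).1 (hr ▸ ENNReal.ofReal_le_ofReal hv.le)
  rw [ENNReal.mul_sub fun _ _ => ENNReal.ofReal_ne_top, hsplit,
    ENNReal.add_sub_cancel_left (ENNReal.mul_ne_top ENNReal.ofReal_ne_top hR)]

lemma sharpSharpNorm_le_sharpNorm (hlim : Tendsto (dstar μ f) atTop (𝓝 0))
    (p : ℝ) : sharpSharpNorm μ p f ≤ sharpNorm μ p f := by
  refine iSup₂_le fun t ht => ?_
  rcases eq_or_ne (distFun μ f t) 0 with h0 | h0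
  · rw [setLIntegral_Ioi_distFun_eq_zero h0, mul_zero]
    exact zero_le
  set s := (distFun μ f t).toReal
  have hs : 0 < s := ENNReal.toReal_pos h0 (distFun_ne_top hlim ht)
  have hts : distFun μ f t = ENNReal.ofReal s :=
    (ENNReal.ofReal_toReal (distFun_ne_top hlim ht)).symm
  have hRt : rearr μ f s ≤ ENNReal.ofReal t := (rearr_le_ofReal_iff ht).2 hts.le
  calc distFun μ f t ^ (-(1 - 1 / p)) * ∫⁻ v in Ioi t, distFun μ f v
      ≤ ENNReal.ofReal s ^ (-(1 - 1 / p)) * ∫⁻ v in Ioi (rearr μ f s).toReal, distFun μ f v := by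
        rw [hts]
        gcongr
        exact ENNReal.toReal_le_of_le_ofReal ht.le hRt
    _ = ENNReal.ofReal s ^ (1 / p) * (dstar μ f s - rearr μ f s) := by
        rw [← ofReal_mul_dstar_sub_rearr hs (ne_top_of_le_ne_top ENNReal.ofReal_ne_top hRt),
          ENNReal.rpow_neg_one_sub_mul_mul (ENNReal.ofReal_pos.2 hs).ne' ENNReal.ofReal_ne_top]
    _ ≤ sharpNorm μ p f :=
        le_iSup₂ (α := ℝ≥0∞) (f := fun s (_ : 0 < s) => _) s hs

lemma sharpNorm_le_sharpSharpNorm (hlim : Tendsto (dstar μ f) atTop (𝓝 0))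
    {p : ℝ} (hp : 1 ≤ p) : sharpNorm μ p f ≤ sharpSharpNorm μ p f := by
  have hexp : 0 ≤ 1 - 1 / p := sub_nonneg.2 ((div_le_one (by linarith)).2 hp)
  set K := sharpSharpNorm μ p f
  refine iSup₂_le fun s hs => ?_
  have hR := rearr_ne_top hlim hs
  have hI : ∫⁻ v in Ioi (rearr μ f s).toReal, distFun μ f v
      ≤ ENNReal.ofReal s ^ (1 - 1 / p) * K := by
    refine setLIntegral_Ioi_le_of_forall_lt fun v hv => ?_
    have hv0 : 0 < v := ENNReal.toReal_nonneg.trans_lt hv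
    have hvs : distFun μ f v ≤ ENNReal.ofReal s := (rearr_le_ofReal_iff hv0).1
      (ENNReal.le_ofReal_iff_toReal_le hR hv0.le |>.2 hv.le)
    rcases eq_or_ne (distFun μ f v) 0 with h0 | h0
    · rw [setLIntegral_Ioi_distFun_eq_zero h0]
      exact zero_le
    calc ∫⁻ w in Ioi v, distFun μ f w
        = distFun μ f v ^ (1 - 1 / p)
            * (distFun μ f v ^ (-(1 - 1 / p)) * ∫⁻ w in Ioi v, distFun μ f w) :=
          (ENNReal.rpow_mul_rpow_neg_mul h0 (distFun_ne_top hlim hv0) _ _).symm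
      _ ≤ ENNReal.ofReal s ^ (1 - 1 / p) * K := by
          gcongr
          exact le_iSup₂ (α := ℝ≥0∞) (f := fun t (_ : 0 < t) => _) v hv0
  have hs0 : ENNReal.ofReal s ≠ 0 := (ENNReal.ofReal_pos.2 hs).ne'
  calc ENNReal.ofReal s ^ (1 / p) * (dstar μ f s - rearr μ f s)
      = ENNReal.ofReal s ^ (-(1 - 1 / p)) * ∫⁻ v in Ioi (rearr μ f s).toReal, distFun μ f v := by
        rw [← ofReal_mul_dstar_sub_rearr hs hR,
          ENNReal.rpow_neg_one_sub_mul_mul hs0 ENNReal.ofReal_ne_top]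
    _ ≤ ENNReal.ofReal s ^ (-(1 - 1 / p)) * (ENNReal.ofReal s ^ (1 - 1 / p) * K) := by gcongr
    _ = K := ENNReal.rpow_neg_mul_rpow_mul hs0 ENNReal.ofReal_ne_top _ K

lemma sharpNorm_eq_sharpSharpNorm (hlim : Tendsto (dstar μ f) atTop (𝓝 0)) {p : ℝ} (hp : 1 ≤ p) :
    sharpNorm μ p f = sharpSharpNorm μ p f :=
  le_antisymm (sharpNorm_le_sharpSharpNorm hlim hp) (sharpSharpNorm_le_sharpNorm hlim p)

lemma wkNormStar_le_wkNormStarStar (p : ℝ) : wkNormStar μ p f ≤ wkNormStarStar μ p f :=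
  iSup₂_mono fun _ hs => by gcongr; exact rearr_le_dstar hs

lemma sharpNorm_le_wkNormStarStar (p : ℝ) : sharpNorm μ p f ≤ wkNormStarStar μ p f :=
  iSup₂_mono fun _ _ => by gcongr; exact tsub_le_self

lemma wkNormStarStar_le_mul_wkNormStar {p : ℝ} (hp : 1 < p) :
    wkNormStarStar μ p f ≤ ENNReal.ofReal (p / (p - 1)) * wkNormStar μ p f := by
  set M := wkNormStar μ p f
  refine iSup₂_le fun t ht => ?_
  have ht0 : ENNReal.ofReal t ≠ 0 := (ENNReal.ofReal_pos.2 ht).ne'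
  have hR : ∀ u ∈ Ioc 0 t, rearr μ f u ≤ ENNReal.ofReal u ^ (-(1 / p)) * M := fun u hu => by
    rw [← ENNReal.rpow_neg_mul_rpow_mul (ENNReal.ofReal_pos.2 hu.1).ne' ENNReal.ofReal_ne_top
      (1 / p) (rearr μ f u)]
    gcongr
    exact le_iSup₂ (α := ℝ≥0∞) (f := fun s (_ : 0 < s) => _) u hu.1
  have hHardy : ∫⁻ u in Ioc 0 t, ENNReal.ofReal u ^ (-(1 / p))
      = ENNReal.ofReal t ^ (1 - 1 / p) * ENNReal.ofReal (p / (p - 1)) := by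
    have hp0 : 0 < p := by linarith
    rw [setLIntegral_Ioc_ofReal_rpow (by rw [neg_lt_neg_iff, div_lt_one hp0]; exact hp) ht.le,
      ENNReal.ofReal_rpow_of_pos ht, ← ENNReal.ofReal_mul (by positivity)]
    congr 1
    field_simp
    ring_nf
  calc ENNReal.ofReal t ^ (1 / p) * dstar μ f t
      = ENNReal.ofReal t ^ (-(1 - 1 / p)) * ∫⁻ u in Ioc 0 t, rearr μ f u := by
        rw [← ofReal_mul_dstar ht, ENNReal.rpow_neg_one_sub_mul_mul ht0 ENNReal.ofReal_ne_top]
    _ ≤ ENNReal.ofReal t ^ (-(1 - 1 / p)) * ∫⁻ u in Ioc 0 t, ENNReal.ofReal u ^ (-(1 / p)) * M :=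
        mul_le_mul_right (setLIntegral_mono' measurableSet_Ioc hR) _
    _ = ENNReal.ofReal (p / (p - 1)) * M := by
        rw [lintegral_mul_const _ (by fun_prop), hHardy, mul_assoc,
          ENNReal.rpow_neg_mul_rpow_mul ht0 ENNReal.ofReal_ne_top]

lemma dstar_le_dstar_two_mul_add {t : ℝ} (ht : 0 < t) (hR : rearr μ f (2 * t) ≠ ⊤) :
    dstar μ f t ≤ dstar μ f (2 * t) + (dstar μ f (2 * t) - rearr μ f (2 * t)) := by
  have ht0 : ENNReal.ofReal t ≠ 0 := (ENNReal.ofReal_pos.2 ht).ne'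
  have hkey : dstar μ f t + rearr μ f (2 * t) ≤ dstar μ f (2 * t) + dstar μ f (2 * t) := by
    refine (ENNReal.mul_le_mul_iff_right ht0 ENNReal.ofReal_ne_top).1 ?_
    calc ENNReal.ofReal t * (dstar μ f t + rearr μ f (2 * t))
        = (∫⁻ u in Ioc 0 t, rearr μ f u) + ENNReal.ofReal (2 * t - t) * rearr μ f (2 * t) := by
          rw [mul_add, ofReal_mul_dstar ht, two_mul, add_sub_cancel_right]
      _ ≤ (∫⁻ u in Ioc 0 t, rearr μ f u) + ∫⁻ u in Ioc t (2 * t), rearr μ f u := by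
          gcongr
          exact rearr_antitone.mul_le_setLIntegral_Ioc t (2 * t)
      _ = ENNReal.ofReal (2 * t) * dstar μ f (2 * t) := by
          rw [← lintegral_union measurableSet_Ioc (Ioc_disjoint_Ioc_of_le le_rfl),
            Ioc_union_Ioc_eq_Ioc ht.le (by linarith), ofReal_mul_dstar (by linarith)]
      _ = ENNReal.ofReal t * (dstar μ f (2 * t) + dstar μ f (2 * t)) := by
          rw [← two_mul, ENNReal.ofReal_mul zero_le_two, ENNReal.ofReal_ofNat, mul_comm 2,
            mul_assoc]
  calc dstar μ f t ≤ dstar μ f (2 * t) + dstar μ f (2 * t) - rearr μ f (2 * t) :=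
        ENNReal.le_sub_of_add_le_right hR hkey
    _ ≤ dstar μ f (2 * t) + (dstar μ f (2 * t) - rearr μ f (2 * t)) := add_tsub_le_assoc

lemma wkNormStarStar_le_mul_sharpNorm (hlim : Tendsto (dstar μ f) atTop (𝓝 0))
    {p : ℝ} (hp : 0 < p) :
    wkNormStarStar μ p f ≤ (1 - ENNReal.ofReal (2 ^ (-(1 / p))))⁻¹ * sharpNorm μ p f := by
  set K := sharpNorm μ p f
  set σ := ENNReal.ofReal (2 ^ (-(1 / p)))
  refine iSup₂_le fun t ht => ?_
  have ht0 : ENNReal.ofReal t ≠ 0 := (ENNReal.ofReal_pos.2 ht).ne'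
  have hσ : σ ≤ 1 := (ofReal_two_rpow_neg_lt_one hp).le
  have hψ : ∀ k : ℕ, dstar μ f (2 ^ (k + 1) * t) - rearr μ f (2 ^ (k + 1) * t)
      ≤ σ ^ (k + 1) * (ENNReal.ofReal t ^ (-(1 / p)) * K) := fun k => by
    have hs : (0 : ℝ) < 2 ^ (k + 1) * t := by positivity
    have hscale : ENNReal.ofReal (2 ^ (k + 1) * t) ^ (-(1 / p))
        = σ ^ (k + 1) * ENNReal.ofReal t ^ (-(1 / p)) := by
      rw [ENNReal.ofReal_mul (by positivity), ENNReal.mul_rpow_of_ne_top ENNReal.ofReal_ne_top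
        ENNReal.ofReal_ne_top, ENNReal.ofReal_rpow_of_pos (by positivity),
        ← Real.rpow_pow_comm zero_le_two, ENNReal.ofReal_pow (by positivity)]
    rw [← mul_assoc, ← hscale, ← ENNReal.rpow_neg_mul_rpow_mul (ENNReal.ofReal_pos.2 hs).ne'
      ENNReal.ofReal_ne_top (1 / p) (dstar μ f _ - rearr μ f _)]
    gcongr
    exact le_iSup₂ (α := ℝ≥0∞) (f := fun s (_ : 0 < s) => _) _ hs
  have hgeom : ∑' k : ℕ, σ ^ (k + 1) ≤ (1 - σ)⁻¹ :=
    (ENNReal.tsum_le_tsum fun k => pow_le_pow_of_le_one zero_le hσ k.le_succ).trans_eq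
      (ENNReal.tsum_geometric σ)
  have hdstar : dstar μ f t ≤ (1 - σ)⁻¹ * (ENNReal.ofReal t ^ (-(1 / p)) * K) :=
    calc dstar μ f t
        ≤ ∑' k : ℕ, (dstar μ f (2 ^ (k + 1) * t) - rearr μ f (2 ^ (k + 1) * t)) :=
          le_tsum_of_le_add_comp_two_mul (ψ := fun s => dstar μ f s - rearr μ f s) hlim
            (fun s hs => dstar_le_dstar_two_mul_add hs (rearr_ne_top hlim (by positivity))) ht
      _ ≤ ∑' k : ℕ, σ ^ (k + 1) * (ENNReal.ofReal t ^ (-(1 / p)) * K) := ENNReal.tsum_le_tsum hψ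
      _ ≤ (1 - σ)⁻¹ * (ENNReal.ofReal t ^ (-(1 / p)) * K) := by
          rw [ENNReal.tsum_mul_right]
          gcongr
  calc ENNReal.ofReal t ^ (1 / p) * dstar μ f t
      ≤ ENNReal.ofReal t ^ (1 / p) * ((1 - σ)⁻¹ * (ENNReal.ofReal t ^ (-(1 / p)) * K)) := by
        gcongr
    _ = (1 - σ)⁻¹ * K := by
        rw [mul_left_comm, ENNReal.rpow_mul_rpow_neg_mul ht0 ENNReal.ofReal_ne_top]

end

theorem weakLp_char_general {α : Type*} [MeasurableSpace α] (μ : Measure α) (p : ℝ) (hp : 1 < p)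
    (f : α → ℝ)
    (hlim : Filter.Tendsto (dstar μ f) Filter.atTop (nhds 0)) :
    (wkNormStar μ p f ≠ ⊤ ↔ wkNormStarStar μ p f ≠ ⊤) ∧
    (wkNormStar μ p f ≠ ⊤ ↔ sharpNorm μ p f ≠ ⊤) ∧
    (sharpNorm μ p f ≠ ⊤ ↔ sharpSharpNorm μ p f ≠ ⊤) := by
  have hstar : wkNormStar μ p f ≠ ⊤ ↔ wkNormStarStar μ p f ≠ ⊤ :=
    ⟨fun h => ne_top_of_le_ne_top (ENNReal.mul_ne_top ENNReal.ofReal_ne_top h)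
        (wkNormStarStar_le_mul_wkNormStar hp),
      fun h => ne_top_of_le_ne_top h (wkNormStar_le_wkNormStarStar p)⟩
  have hC : (1 - ENNReal.ofReal (2 ^ (-(1 / p))))⁻¹ ≠ ⊤ :=
    ENNReal.inv_ne_top.2 (tsub_pos_of_lt (ofReal_two_rpow_neg_lt_one (by linarith))).ne'
  have hsharp : sharpNorm μ p f ≠ ⊤ ↔ wkNormStarStar μ p f ≠ ⊤ :=
    ⟨fun h => ne_top_of_le_ne_top (ENNReal.mul_ne_top hC h)
        (wkNormStarStar_le_mul_sharpNorm hlim (by linarith)),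
      fun h => ne_top_of_le_ne_top h (sharpNorm_le_wkNormStarStar p)⟩
  exact ⟨hstar, hstar.trans hsharp.symm, by rw [sharpNorm_eq_sharpSharpNorm hlim hp.le]⟩

/-- for `1 < p < ∞` and `f` with `f**(∞) = 0`, the conditions
`‖f‖*_{L(p,∞)} < ∞` (equivalently `‖f‖_{L(p,∞)} < ∞`), `‖f‖^#_{L(p,∞)} < ∞` and
`‖f‖^{##}_{L(p,∞)} < ∞` are all equivalent. -/
theorem weakLp_char {α : Type*} [MeasurableSpace α] (μ : Measure α) (p : ℝ) (hp : 1 < p)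
    (f : α → ℝ) (hf : Measurable f)
    (hlim : Filter.Tendsto (dstar μ f) Filter.atTop (nhds 0)) :
    (wkNormStar μ p f ≠ ⊤ ↔ wkNormStarStar μ p f ≠ ⊤) ∧
    (wkNormStar μ p f ≠ ⊤ ↔ sharpNorm μ p f ≠ ⊤) ∧
    (sharpNorm μ p f ≠ ⊤ ↔ sharpSharpNorm μ p f ≠ ⊤) :=
  weakLp_char_general μ p hp f hlim
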